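/- arXiv:math/0411405 — 2 statements merged into one kernel-verified Lean document; each statement's English description precedes it below -/
import Mathlib

section
/- Let n ≥ 1 and let F ∈ ℂ[X_0,…,X_{n+1}] be a nonzero homogeneous polynomial of degree d ≥ 1. Then im(E) ⊆ ker(h), and dim_ℂ R_{2d−n−2} = c_d + dim_ℂ(ker(h)/im(E)), where c_d = C(2d−1, n+1) − (n+2)·C(d, n+1). (In the paper this is the Proposition dim R_{2d−n−2} = c_d − dim H^0(X, Ω^n(log X)) rewritten via the identification of ker(h)/im(E) with H^0 of the sheaf of logarithmic n-forms; in particular, if ker(h) = im(E) then dim_ℂ R_{2d−n−2} = c_d.) -/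
/-!
Let `W = S_{d-n-1}^{⊕(n+2)}` and `φ(A) = ∑ A_i ∂F/∂X_i`. The Jacobian ideal is generated by
forms of degree `d - 1`, so its part of degree `2d - n - 2` is `φ(W)`, and
`dim R_{2d-n-2} = dim S_{2d-n-2} - dim W + dim (W ∩ ker φ)`.
By Euler's identity `φ(E B) = d • F B`, so `φ` maps `ker h` onto `F • S_{d-n-2}` with kernel
`W ∩ ker φ`; since multiplication by `F` and `E` are injective,
`dim (ker h / im E) = dim ker h - dim S_{d-n-2} = dim (W ∩ ker φ)`.
Finally `dim S_k = C(k+n+1, n+1)` by counting monomials.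
-/

open MvPolynomial

/-- The space `S_k` of homogeneous polynomials of (integer) degree `k`,
with `S_k = 0` for `k < 0`. -/
noncomputable def gradedPiece (n : ℕ) (k : ℤ) :
    Submodule ℂ (MvPolynomial (Fin (n + 2)) ℂ) :=
  if 0 ≤ k then homogeneousSubmodule (Fin (n + 2)) ℂ k.toNat else ⊥

/-- The Jacobian ideal of `F`, generated by its partial derivatives. -/
noncomputable def jacobianIdeal (n : ℕ) (F : MvPolynomial (Fin (n + 2)) ℂ) :
    Ideal (MvPolynomial (Fin (n + 2)) ℂ) :=
  Ideal.span (Set.range fun i => pderiv i F)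

/-- The graded piece `R_k = S_k/(J(F) ∩ S_k)` of the Jacobian ring in (integer)
degree `k`, realized as the image of `S_k` in `S/J(F)`. -/
noncomputable def jacobianRingPiece (n : ℕ) (F : MvPolynomial (Fin (n + 2)) ℂ) (k : ℤ) :
    Submodule ℂ (MvPolynomial (Fin (n + 2)) ℂ ⧸
      Submodule.restrictScalars ℂ (jacobianIdeal n F)) :=
  Submodule.map (Submodule.restrictScalars ℂ (jacobianIdeal n F)).mkQ (gradedPiece n k)

/-- The Euler map `E : S → S^{n+2}`, `B ↦ (X_0 B, …, X_{n+1} B)`. -/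
noncomputable def eulerMap (n : ℕ) :
    MvPolynomial (Fin (n + 2)) ℂ →ₗ[ℂ] (Fin (n + 2) → MvPolynomial (Fin (n + 2)) ℂ) :=
  LinearMap.pi fun i => LinearMap.mulLeft ℂ (X i)

/-- The map `S^{n+2} → S`, `(A_0, …, A_{n+1}) ↦ ∑ A_i ∂F/∂X_i`. -/
noncomputable def jacMap (n : ℕ) (F : MvPolynomial (Fin (n + 2)) ℂ) :
    (Fin (n + 2) → MvPolynomial (Fin (n + 2)) ℂ) →ₗ[ℂ] MvPolynomial (Fin (n + 2)) ℂ :=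
  ∑ i, (LinearMap.mulRight ℂ (pderiv i F)).comp (LinearMap.proj i)

/-- `im(E)`: the image of `S_{d-n-2}` under the Euler map. -/
noncomputable def imE (n d : ℕ) :
    Submodule ℂ (Fin (n + 2) → MvPolynomial (Fin (n + 2)) ℂ) :=
  Submodule.map (eulerMap n) (gradedPiece n ((d : ℤ) - n - 2))

/-- `ker(h)`: the tuples `(A_0, …, A_{n+1}) ∈ S_{d-n-1}^{⊕(n+2)}` with
`∑ A_i ∂F/∂X_i ∈ F·S_{d-n-2}`. -/
noncomputable def kerH (n d : ℕ) (F : MvPolynomial (Fin (n + 2)) ℂ) :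
    Submodule ℂ (Fin (n + 2) → MvPolynomial (Fin (n + 2)) ℂ) :=
  (Submodule.pi Set.univ fun _ => gradedPiece n ((d : ℤ) - n - 1)) ⊓
    Submodule.comap (jacMap n F)
      (Submodule.map (LinearMap.mulLeft ℂ F) (gradedPiece n ((d : ℤ) - n - 2)))

open Module

section LinearAlgebra

variable {K V U : Type*} [Field K] [AddCommGroup V] [Module K V] [AddCommGroup U] [Module K U]

theorem Submodule.finrank_map_add_finrank_inf_ker (f : V →ₗ[K] U) (p : Submodule K V)
    [FiniteDimensional K p] :
    finrank K (p.map f) + finrank K ↥(p ⊓ LinearMap.ker f) = finrank K p := by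
  rw [← LinearMap.range_domRestrict, ← LinearMap.finrank_range_add_finrank_ker (f.domRestrict p),
    LinearMap.ker_domRestrict, ← p.finrank_map_subtype_eq, Submodule.map_comap_subtype]

theorem Submodule.finrank_map_add_finrank_inf_comap (f : V →ₗ[K] U) (p : Submodule K V)
    [FiniteDimensional K p] {q : Submodule K U} (hq : q ≤ p.map f) :
    finrank K (p.map f) + finrank K ↥(p ⊓ q.comap f) = finrank K p + finrank K q := by
  have hmap : (p ⊓ q.comap f).map f = q := by
    rw [← Submodule.map_inf_eq_map_inf_comap, inf_eq_right.mpr hq]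
  have hker : p ⊓ q.comap f ⊓ LinearMap.ker f = p ⊓ LinearMap.ker f := by
    have : LinearMap.ker f ≤ q.comap f := fun x hx => by simp [LinearMap.mem_ker.mp hx]
    rw [inf_assoc, inf_eq_right.mpr this]
  have := Submodule.finrank_map_add_finrank_inf_ker f (p ⊓ q.comap f)
  rw [hmap, hker] at this
  have := Submodule.finrank_map_add_finrank_inf_ker f p
  omega

theorem Submodule.finrank_quotient_comap_subtype_add_finrank {p q : Submodule K V}
    [FiniteDimensional K p] (h : q ≤ p) :
    finrank K (p ⧸ q.comap p.subtype) + finrank K q = finrank K p := by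
  rw [← Submodule.finrank_quotient_add_finrank (q.comap p.subtype), ← p.finrank_map_subtype_eq,
    Submodule.map_comap_subtype, inf_eq_right.mpr h]

theorem Submodule.finrank_map_of_injective {f : V →ₗ[K] U} (hf : Function.Injective f)
    (p : Submodule K V) : finrank K (p.map f) = finrank K p :=
  (Submodule.equivMapOfInjective f hf p).finrank_eq.symm

theorem Submodule.pi_univ_const_eq_range (ι : Type*) (p : Submodule K V) :
    Submodule.pi Set.univ (fun _ : ι => p) = LinearMap.range (p.subtype.compLeft ι) := by
  rw [LinearMap.range_compLeft, Submodule.range_subtype]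

instance Submodule.finiteDimensional_pi_univ_const {ι : Type*} [Finite ι] (p : Submodule K V)
    [FiniteDimensional K p] : FiniteDimensional K (Submodule.pi Set.univ fun _ : ι => p) := by
  rw [Submodule.pi_univ_const_eq_range]
  infer_instance

theorem Submodule.finrank_pi_univ_const {ι : Type*} [Fintype ι] (p : Submodule K V)
    [FiniteDimensional K p] :
    finrank K (Submodule.pi Set.univ fun _ : ι => p) = Fintype.card ι * finrank K p := by
  rw [Submodule.pi_univ_const_eq_range, LinearMap.finrank_range_of_inj
    (Function.Injective.comp_left p.injective_subtype), Module.finrank_pi_fintype]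
  simp

end LinearAlgebra

namespace MvPolynomial

theorem finrank_homogeneousSubmodule {σ K : Type*} [Fintype σ] [Field K] (k : ℕ) :
    finrank K (homogeneousSubmodule σ K k) = (Fintype.card σ + k - 1).choose k := by
  classical
  have hdeg : {d : σ →₀ ℕ | d.degree = k} =
      ↑(Finset.univ.finsuppAntidiag k : Finset (σ →₀ ℕ)) := by
    ext d
    simp [Finset.mem_finsuppAntidiag, Finsupp.degree_eq_sum]
  rw [homogeneousSubmodule_eq_finsupp_supported, hdeg,
    (AddMonoidAlgebra.supportedEquivFinsupp _).finrank_eq, Module.finrank_finsupp_self]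
  simp [Finset.card_finsuppAntidiag_nat_eq_choose]

attribute [local instance] MvPolynomial.gradedAlgebra in
theorem homogeneousComponent_mul_of_isHomogeneous {σ R : Type*} [CommSemiring R]
    {g : MvPolynomial σ R} {e : ℕ} (hg : g.IsHomogeneous e) (c : MvPolynomial σ R) (m : ℕ) :
    homogeneousComponent m (c * g) = if e ≤ m then homogeneousComponent (m - e) c * g else 0 := by
  rw [← decomposition.decompose'_apply, ← decomposition.decompose'_apply]
  exact DirectSum.coe_decompose_mul_of_right_mem (homogeneousSubmodule σ R) m hg

instance finiteDimensional_homogeneousSubmodule {σ K : Type*} [Finite σ] [Field K] (k : ℕ) :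
    FiniteDimensional K (homogeneousSubmodule σ K k) :=
  Module.Finite.iff_fg.mpr (homogeneousSubmodule_fg (σ := σ) (R := K) k)

end MvPolynomial

section GradedPiece

variable {n : ℕ}

theorem gradedPiece_natCast (m : ℕ) :
    gradedPiece n m = homogeneousSubmodule (Fin (n + 2)) ℂ m := by
  simp [gradedPiece]

theorem gradedPiece_of_neg {k : ℤ} (hk : k < 0) : gradedPiece n k = ⊥ := by
  simp [gradedPiece, not_le.mpr hk]

instance (k : ℤ) : FiniteDimensional ℂ (gradedPiece n k) := by
  rcases lt_or_ge k 0 with hk | hk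
  · rw [gradedPiece_of_neg hk]
    infer_instance
  · rw [← Int.toNat_of_nonneg hk, gradedPiece_natCast]
    infer_instance

theorem finrank_gradedPiece (k : ℤ) :
    finrank ℂ (gradedPiece n k) = (k + n + 1).toNat.choose (n + 1) := by
  rcases lt_or_ge k 0 with hk | hk
  · rw [gradedPiece_of_neg hk, finrank_bot, Nat.choose_eq_zero_of_lt (by omega)]
  · obtain ⟨m, rfl⟩ := Int.eq_ofNat_of_zero_le hk
    rw [gradedPiece_natCast, finrank_homogeneousSubmodule, Fintype.card_fin,
      Nat.choose_symm_of_eq_add (show n + 2 + m - 1 = m + (n + 1) by omega)]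
    congr 1
    omega

theorem mul_mem_gradedPiece {k : ℤ} {e : ℕ} {B g : MvPolynomial (Fin (n + 2)) ℂ}
    (hB : B ∈ gradedPiece n k) (hg : g.IsHomogeneous e) : B * g ∈ gradedPiece n (k + e) := by
  rcases lt_or_ge k 0 with hk | hk
  · rw [gradedPiece_of_neg hk, Submodule.mem_bot] at hB
    simp [hB]
  · obtain ⟨m, rfl⟩ := Int.eq_ofNat_of_zero_le hk
    rw [gradedPiece_natCast] at hB
    rw [← Nat.cast_add, gradedPiece_natCast]
    exact hB.mul hg

noncomputable def gradedComponent (n : ℕ) (k : ℤ) :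
    MvPolynomial (Fin (n + 2)) ℂ →ₗ[ℂ] MvPolynomial (Fin (n + 2)) ℂ :=
  if 0 ≤ k then homogeneousComponent k.toNat else 0

theorem gradedComponent_mem (k : ℤ) (p : MvPolynomial (Fin (n + 2)) ℂ) :
    gradedComponent n k p ∈ gradedPiece n k := by
  unfold gradedComponent gradedPiece
  split_ifs
  · exact homogeneousComponent_mem _ _
  · exact Submodule.zero_mem _

theorem gradedComponent_of_mem {k : ℤ} {p : MvPolynomial (Fin (n + 2)) ℂ}
    (hp : p ∈ gradedPiece n k) : gradedComponent n k p = p := by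
  unfold gradedComponent
  unfold gradedPiece at hp
  split_ifs at hp ⊢
  · exact homogeneousComponent_eq_self hp
  · rw [Submodule.mem_bot] at hp
    simp [hp]

theorem gradedComponent_mul_of_isHomogeneous {e : ℕ} {g : MvPolynomial (Fin (n + 2)) ℂ}
    (hg : g.IsHomogeneous e) (k : ℤ) (c : MvPolynomial (Fin (n + 2)) ℂ) :
    gradedComponent n (k + e) (c * g) = gradedComponent n k c * g := by
  unfold gradedComponent
  split_ifs with hke hk
  · rw [homogeneousComponent_mul_of_isHomogeneous hg, if_pos (by omega),
      show (k + e).toNat - e = k.toNat by omega]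
  · rw [homogeneousComponent_mul_of_isHomogeneous hg, if_neg (by omega)]
    simp
  · omega
  · simp

theorem exists_gradedPiece_coeffs_of_mem_span {ι : Type*} [Fintype ι]
    {g : ι → MvPolynomial (Fin (n + 2)) ℂ} {e : ℕ} (hg : ∀ i, (g i).IsHomogeneous e) {k : ℤ}
    {p : MvPolynomial (Fin (n + 2)) ℂ} (hp : p ∈ gradedPiece n (k + e))
    (hpI : p ∈ Ideal.span (Set.range g)) :
    ∃ c : ι → MvPolynomial (Fin (n + 2)) ℂ,
      (∀ i, c i ∈ gradedPiece n k) ∧ ∑ i, c i * g i = p := by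
  obtain ⟨c, rfl⟩ := Ideal.mem_span_range_iff_exists_fun.mp hpI
  refine ⟨fun i => gradedComponent n k (c i), fun i => gradedComponent_mem k (c i), ?_⟩
  rw [← gradedComponent_of_mem hp, map_sum]
  simp only [gradedComponent_mul_of_isHomogeneous (hg _)]

end GradedPiece

section Jacobian

variable {n d : ℕ} {F : MvPolynomial (Fin (n + 2)) ℂ}

@[simp]
theorem jacMap_apply (F : MvPolynomial (Fin (n + 2)) ℂ)
    (A : Fin (n + 2) → MvPolynomial (Fin (n + 2)) ℂ) :
    jacMap n F A = ∑ i, A i * pderiv i F := by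
  simp [jacMap]

@[simp]
theorem eulerMap_apply (B : MvPolynomial (Fin (n + 2)) ℂ) :
    eulerMap n B = fun i => X i * B := by
  ext1 i
  simp [eulerMap]

theorem eulerMap_injective : Function.Injective (eulerMap n) := fun _ _ h =>
  mul_left_cancel₀ (X_ne_zero 0) (by simpa using congrFun h 0)

theorem jacMap_eulerMap (hF : F.IsHomogeneous d) (B : MvPolynomial (Fin (n + 2)) ℂ) :
    jacMap n F (eulerMap n B) = (d : ℂ) • (F * B) := by
  simp_rw [jacMap_apply, eulerMap_apply, mul_right_comm _ B, ← Finset.sum_mul,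
    hF.sum_X_mul_pderiv, smul_mul_assoc, Nat.cast_smul_eq_nsmul]

instance : FiniteDimensional ℂ (kerH n d F) :=
  Submodule.finiteDimensional_of_le inf_le_left

theorem imE_le_pi :
    imE n d ≤ Submodule.pi Set.univ fun _ => gradedPiece n ((d : ℤ) - n - 1) := by
  rintro _ ⟨B, hB, rfl⟩ i -
  have := mul_mem_gradedPiece hB (isHomogeneous_X ℂ i)
  rw [mul_comm, show (d : ℤ) - n - 2 + (1 : ℕ) = d - n - 1 by push_cast; ring] at this
  simpa using this

theorem imE_le_kerH (hF : F.IsHomogeneous d) : imE n d ≤ kerH n d F := by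
  refine le_inf imE_le_pi ?_
  rintro _ ⟨B, hB, rfl⟩
  rw [Submodule.mem_comap, jacMap_eulerMap hF, ← mul_smul_comm]
  exact ⟨_, Submodule.smul_mem _ _ hB, rfl⟩

theorem finrank_imE : finrank ℂ (imE n d) = finrank ℂ (gradedPiece n ((d : ℤ) - n - 2)) :=
  Submodule.finrank_map_of_injective eulerMap_injective _

theorem map_mulLeft_le_map_jacMap (hd : d ≠ 0) (hF : F.IsHomogeneous d) :
    (gradedPiece n ((d : ℤ) - n - 2)).map (LinearMap.mulLeft ℂ F) ≤
      (Submodule.pi Set.univ fun _ => gradedPiece n ((d : ℤ) - n - 1)).map (jacMap n F) := by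
  rintro _ ⟨B, hB, rfl⟩
  refine ⟨eulerMap n ((d : ℂ)⁻¹ • B), imE_le_pi ⟨_, Submodule.smul_mem _ _ hB, rfl⟩, ?_⟩
  rw [jacMap_eulerMap hF, mul_smul_comm, smul_smul, mul_inv_cancel₀ (by exact_mod_cast hd),
    one_smul]
  rfl

theorem gradedPiece_inf_jacobianIdeal (hF : F.IsHomogeneous d) (k : ℤ) :
    gradedPiece n (k + (d - 1 : ℕ)) ⊓ (jacobianIdeal n F).restrictScalars ℂ =
      (Submodule.pi Set.univ fun _ => gradedPiece n k).map (jacMap n F) := by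
  apply le_antisymm
  · rintro p ⟨hp, hpJ⟩
    obtain ⟨c, hc, rfl⟩ :=
      exists_gradedPiece_coeffs_of_mem_span (fun i => hF.pderiv (i := i)) hp hpJ
    exact ⟨c, fun i _ => hc i, jacMap_apply F c⟩
  · rintro _ ⟨A, hA, rfl⟩
    rw [jacMap_apply]
    exact ⟨Submodule.sum_mem _ fun i _ => mul_mem_gradedPiece (hA i trivial) hF.pderiv,
      Ideal.sum_mem _ fun i _ => Ideal.mul_mem_left _ _ (Ideal.subset_span ⟨i, rfl⟩)⟩

theorem finrank_jacobianRingPiece_add (hF : F.IsHomogeneous d) (k : ℤ) :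
    finrank ℂ (jacobianRingPiece n F (k + (d - 1 : ℕ))) +
        finrank ℂ ((Submodule.pi Set.univ fun _ => gradedPiece n k).map (jacMap n F)) =
      finrank ℂ (gradedPiece n (k + (d - 1 : ℕ))) := by
  have := Submodule.finrank_map_add_finrank_inf_ker
    (Submodule.restrictScalars ℂ (jacobianIdeal n F)).mkQ (gradedPiece n (k + (d - 1 : ℕ)))
  rwa [Submodule.ker_mkQ, gradedPiece_inf_jacobianIdeal hF] at this

end Jacobian

theorem dim_jacobian_ring_middle_piece_general_general
    (n d : ℕ) (hd : 1 ≤ d)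
    (F : MvPolynomial (Fin (n + 2)) ℂ) (hF0 : F ≠ 0) (hF : F.IsHomogeneous d) :
    imE n d ≤ kerH n d F ∧
    (Module.finrank ℂ (jacobianRingPiece n F (2 * (d : ℤ) - n - 2)) : ℤ) =
      (((2 * d - 1).choose (n + 1) : ℤ) - (n + 2) * (d.choose (n + 1) : ℤ)) +
        (Module.finrank ℂ
          (↥(kerH n d F) ⧸ Submodule.comap (kerH n d F).subtype (imE n d)) : ℤ) := by
  refine ⟨imE_le_kerH hF, ?_⟩
  set W := Submodule.pi Set.univ fun _ : Fin (n + 2) => gradedPiece n ((d : ℤ) - n - 1)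
  have hR := finrank_jacobianRingPiece_add hF ((d : ℤ) - n - 1)
  rw [show (d : ℤ) - n - 1 + (d - 1 : ℕ) = 2 * d - n - 2 by push_cast [Nat.cast_sub hd]; ring]
    at hR
  have hK : finrank ℂ (W.map (jacMap n F)) + finrank ℂ (kerH n d F) =
      finrank ℂ W + finrank ℂ ((gradedPiece n ((d : ℤ) - n - 2)).map (LinearMap.mulLeft ℂ F)) :=
    Submodule.finrank_map_add_finrank_inf_comap _ _ (map_mulLeft_le_map_jacMap (by omega) hF)
  have hQ := Submodule.finrank_quotient_comap_subtype_add_finrank (imE_le_kerH hF)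
  rw [Submodule.finrank_map_of_injective (f := LinearMap.mulLeft ℂ F)
    (mul_right_injective₀ hF0)] at hK
  rw [finrank_imE] at hQ
  rw [Submodule.finrank_pi_univ_const, Fintype.card_fin, finrank_gradedPiece,
    show ((d : ℤ) - n - 1 + n + 1).toNat = d by omega] at hK
  rw [finrank_gradedPiece, show (2 * (d : ℤ) - n - 2 + n + 1).toNat = 2 * d - 1 by omega] at hR
  linarith

theorem dim_jacobian_ring_middle_piece_general
    (n d : ℕ) (hn : 1 ≤ n) (hd : 1 ≤ d)
    (F : MvPolynomial (Fin (n + 2)) ℂ) (hF0 : F ≠ 0) (hF : F.IsHomogeneous d) :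
    imE n d ≤ kerH n d F ∧
    (Module.finrank ℂ (jacobianRingPiece n F (2 * (d : ℤ) - n - 2)) : ℤ) =
      (((2 * d - 1).choose (n + 1) : ℤ) - (n + 2) * (d.choose (n + 1) : ℤ)) +
        (Module.finrank ℂ
          (↥(kerH n d F) ⧸ Submodule.comap (kerH n d F).subtype (imE n d)) : ℤ) :=
  dim_jacobian_ring_middle_piece_general_general n d hd F hF0 hF
end

section
/- Let f ∈ ℂ[[x,y]] be a nonzero nonunit squarefree formal power series which is quasi-homogeneous, i.e., there exist positive rationals w_x, w_y with w_x·x·f_x + w_y·y·f_y = f. Then the ℂ[[x,y]]-module Ω(f) = {(A,B) ∈ ℂ[[x,y]]² : A·f_y − B·f_x ∈ (f)} is free of rank two with basis (f_x, f_y) and (w_y·y, −w_x·x). (Equivalently: the forms df/f and (w_y·y·dx − w_x·x·dy)/f form a local basis of the sheaf Ω^1(log X) of logarithmic 1-forms along X = V(f).) -/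
/-!
Quasi-homogeneity forces `f` to be a weighted homogeneous polynomial `F` of weight `1`.
For a logarithmic form `(A, B)`, the contraction `g = wx·x·A + wy·y·B` with the Euler
field satisfies `f ∣ g·f_x` and `f ∣ g·f_y`. In the UFD `ℂ[x,y]` the squarefree `F` shares no
prime factor with both `F_x` and `F_y` (such a factor would divide its own partials, hence be
constant), so `F ∣ G·F_x`, `F ∣ G·F_y` imply `F ∣ G` for polynomials `G`. Applied to each
weighted homogeneous component of `g` this gives `f ∣ g`, and then `(A, B)` is an explicit
combination of `(f_x, f_y)` and `(wy·y, −wx·x)`; the Euler relation makes these independent.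
-/

set_option synthInstance.maxHeartbeats 1000000
set_option maxHeartbeats 1000000

/-- Formal partial derivative of a formal power series in two variables
with respect to the `i`-th variable. -/
noncomputable def pderiv2 (i : Fin 2) (f : MvPowerSeries (Fin 2) ℂ) :
    MvPowerSeries (Fin 2) ℂ :=
  fun e => ((e i : ℂ) + 1) * MvPowerSeries.coeff (e + Finsupp.single i 1) f

/-- The map `ℂ[[x,y]]² → ℂ[[x,y]]`, `(A,B) ↦ A·f_y − B·f_x`. -/
noncomputable def logFormsMap (f : MvPowerSeries (Fin 2) ℂ) :
    (MvPowerSeries (Fin 2) ℂ × MvPowerSeries (Fin 2) ℂ) →ₗ[MvPowerSeries (Fin 2) ℂ]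
      MvPowerSeries (Fin 2) ℂ :=
  pderiv2 1 f • LinearMap.fst (MvPowerSeries (Fin 2) ℂ) _ _
    - pderiv2 0 f • LinearMap.snd (MvPowerSeries (Fin 2) ℂ) _ _

/-- `Ω(f) = {(A,B) ∈ ℂ[[x,y]]² : A·f_y − B·f_x ∈ (f)}`, the module of local
sections of the sheaf `Ω¹(log X)` of logarithmic 1-forms along `X = V(f)`. -/
noncomputable def logForms (f : MvPowerSeries (Fin 2) ℂ) :
    Submodule (MvPowerSeries (Fin 2) ℂ)
      (MvPowerSeries (Fin 2) ℂ × MvPowerSeries (Fin 2) ℂ) :=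
  Submodule.comap (logFormsMap f) (Ideal.span {f})

theorem Squarefree.dvd_of_forall_dvd_mul {R ι : Type*} [CommMonoidWithZero R] [Nontrivial R]
    [UniqueFactorizationMonoid R] {F G : R} {a : ι → R} (hF : Squarefree F)
    (ha : ∀ p, Prime p → p ∣ F → ∃ i, ¬p ∣ a i) (hG : ∀ i, F ∣ G * a i) : F ∣ G := by
  induction F using UniqueFactorizationMonoid.induction_on_prime with
  | h₁ => exact absurd hF not_squarefree_zero
  | h₂ u hu => exact hu.dvd
  | h₃ x p _ hp ih =>
    have hx : x ∣ G := ih hF.of_mul_right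
      (fun q hq hqx => ha q hq (hqx.mul_left p)) (fun i => (dvd_mul_left x p).trans (hG i))
    obtain ⟨i, hpi⟩ := ha p hp (dvd_mul_right p x)
    have hpG : p ∣ G := (hp.dvd_or_dvd ((dvd_mul_right p x).trans (hG i))).resolve_right hpi
    exact (IsRelPrime.of_squarefree_mul hF).mul_dvd hpG hx

namespace MvPolynomial

variable {σ R : Type*}

open Finsupp

theorem totalDegree_pderiv_lt [CommSemiring R] {P : MvPolynomial σ R} {i : σ}
    (h : pderiv i P ≠ 0) : (pderiv i P).totalDegree < P.totalDegree := by
  classical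
  obtain ⟨m, hm, hmdeg⟩ := Finset.exists_mem_eq_sup _ (support_nonempty.mpr h)
    fun s => s.sum fun _ e => e
  have hcoeff : coeff (m + single i 1) P ≠ 0 := by
    intro h0
    rw [mem_support_iff, coeff_pderiv, h0, zero_mul] at hm
    exact hm rfl
  calc (pderiv i P).totalDegree = m.sum fun _ e => e := hmdeg
    _ < (m + single i 1).sum fun _ e => e := by
      rw [sum_add_index' (fun _ => rfl) (fun _ _ _ => rfl), sum_single_index rfl]
      omega
    _ ≤ P.totalDegree := le_totalDegree (mem_support_iff.mpr hcoeff)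

theorem pderiv_eq_zero_of_dvd [CommRing R] [IsDomain R] {P : MvPolynomial σ R} {i : σ}
    (h : P ∣ pderiv i P) : pderiv i P = 0 := by
  by_contra hne
  obtain ⟨c, hc⟩ := h
  have hP : P ≠ 0 := by rintro rfl; simp at hne
  have hc0 : c ≠ 0 := by rintro rfl; rw [mul_zero] at hc; exact hne hc
  have := totalDegree_pderiv_lt hne
  rw [hc, totalDegree_mul_of_isDomain hP hc0] at this
  omega

theorem eq_C_of_forall_pderiv_eq_zero [CommRing R] [IsDomain R] [CharZero R]
    {P : MvPolynomial σ R} (h : ∀ i, pderiv i P = 0) : P = C (coeff 0 P) := by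
  classical
  ext m
  rw [coeff_C]
  split_ifs with hm
  · rw [hm]
  obtain ⟨i, hi⟩ : ∃ i, m i ≠ 0 := by
    by_contra! h0
    exact hm (Finsupp.ext h0).symm
  have hle : single i 1 ≤ m := single_le_iff.mpr (Nat.one_le_iff_ne_zero.mpr hi)
  have := coeff_pderiv (i := i) P (m - single i 1)
  rw [h i, tsub_add_cancel_of_le hle, coeff_zero, eq_comm, mul_eq_zero] at this
  exact this.resolve_right (Nat.cast_add_one_ne_zero _)

theorem exists_not_dvd_pderiv_of_squarefree {K : Type*} [Field K] [CharZero K]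
    {F p : MvPolynomial σ K} (hF : Squarefree F) (hp : Prime p) (hpF : p ∣ F) :
    ∃ i, ¬p ∣ pderiv i F := by
  by_contra! hdvd
  obtain ⟨H, rfl⟩ := hpF
  have hpH : ¬p ∣ H := fun ⟨k, hk⟩ => hp.not_isUnit (hF p ⟨k, by rw [hk, mul_assoc]⟩)
  have hder : ∀ i, pderiv i p = 0 := fun i => by
    have := hdvd i
    rw [pderiv_mul, dvd_add_left (dvd_mul_right p _)] at this
    exact pderiv_eq_zero_of_dvd ((hp.dvd_or_dvd this).resolve_right hpH)
  have hC := eq_C_of_forall_pderiv_eq_zero hder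
  have hc : coeff 0 p = 0 := by
    by_contra hc
    exact hp.not_isUnit (hC ▸ (isUnit_iff_ne_zero.mpr hc).map C)
  exact hp.ne_zero (by rw [hC, hc, map_zero])

theorem dvd_of_forall_dvd_mul_pderiv {K : Type*} [Field K] [CharZero K]
    {F G : MvPolynomial σ K} (hF : Squarefree F) (h : ∀ i, F ∣ G * pderiv i F) : F ∣ G :=
  hF.dvd_of_forall_dvd_mul (fun _ hp hpF => exists_not_dvd_pderiv_of_squarefree hF hp hpF) h

variable {M : Type*}

theorem weightedHomogeneousComponent_mul_of_forall [CommSemiring R] [AddCommMonoid M]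
    [IsLeftCancelAdd M] {w : σ → M} {P Q : MvPolynomial σ R} {a b : M}
    (h : ∀ d ∈ P.support, ∀ e ∈ Q.support, weight w d + weight w e = a + b → weight w d = a) :
    weightedHomogeneousComponent w (a + b) (P * Q) =
      weightedHomogeneousComponent w a P * weightedHomogeneousComponent w b Q := by
  classical
  ext m
  simp only [coeff_weightedHomogeneousComponent, coeff_mul]
  split_ifs with hm
  · refine Finset.sum_congr rfl fun ⟨d, e⟩ hde => ?_
    rw [Finset.HasAntidiagonal.mem_antidiagonal] at hde
    by_cases hd : coeff d P = 0
    · simp [hd]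
    by_cases he : coeff e Q = 0
    · simp [he]
    have hsum : weight w d + weight w e = a + b := by rw [← map_add, hde, hm]
    have hda := h d (mem_support_iff.mpr hd) e (mem_support_iff.mpr he) hsum
    rw [hda] at hsum
    simp [hda, add_left_cancel hsum]
  · refine (Finset.sum_eq_zero fun ⟨d, e⟩ hde => ?_).symm
    rw [Finset.HasAntidiagonal.mem_antidiagonal] at hde
    split_ifs with hda heb
    · exact absurd (by rw [← hde, map_add, hda, heb]) hm
    all_goals simp

theorem weightedHomogeneousComponent_weight_ne_zero [CommSemiring R] [AddCommMonoid M]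
    (w : σ → M) {P : MvPolynomial σ R} {d : σ →₀ ℕ} (hd : d ∈ P.support) :
    weightedHomogeneousComponent w (weight w d) P ≠ 0 := by
  classical
  intro h
  have := congrArg (coeff d) h
  rw [coeff_weightedHomogeneousComponent, if_pos rfl, coeff_zero] at this
  exact mem_support_iff.mp hd this

/-- Comparing the top and the bottom weights of `P * Q` shows that those of `P` coincide. -/
theorem IsWeightedHomogeneous.exists_of_mul_left [CommRing R] [IsDomain R] [AddCommMonoid M]
    [LinearOrder M] [IsOrderedCancelAddMonoid M] {w : σ → M} {P Q : MvPolynomial σ R} {t : M}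
    (hPQ : (P * Q).IsWeightedHomogeneous w t) (hPQ0 : P * Q ≠ 0) :
    ∃ m, P.IsWeightedHomogeneous w m := by
  have hP : P.support.Nonempty := support_nonempty.mpr (left_ne_zero_of_mul hPQ0)
  have hQ : Q.support.Nonempty := support_nonempty.mpr (right_ne_zero_of_mul hPQ0)
  have sum_eq : ∀ d ∈ P.support, ∀ e ∈ Q.support,
      (∀ d' ∈ P.support, ∀ e' ∈ Q.support, weight w d' + weight w e' = weight w d + weight w e →
        weight w d' = weight w d) → weight w d + weight w e = t := by
    intro d hd e he hsplit
    by_contra hne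
    apply mul_ne_zero (weightedHomogeneousComponent_weight_ne_zero w hd)
      (weightedHomogeneousComponent_weight_ne_zero w he)
    rw [← weightedHomogeneousComponent_mul_of_forall hsplit]
    exact hPQ.weightedHomogeneousComponent_ne _ hne
  obtain ⟨dmax, hdmax, hPmax⟩ := P.support.exists_max_image (weight w) hP
  obtain ⟨dmin, hdmin, hPmin⟩ := P.support.exists_min_image (weight w) hP
  obtain ⟨emax, hemax, hQmax⟩ := Q.support.exists_max_image (weight w) hQ
  obtain ⟨emin, hemin, hQmin⟩ := Q.support.exists_min_image (weight w) hQ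
  have htop := sum_eq dmax hdmax emax hemax fun d' hd' e' he' hsum =>
    le_antisymm (hPmax d' hd') (le_of_not_gt fun hlt =>
      (add_lt_add_of_lt_of_le hlt (hQmax e' he')).ne hsum)
  have hbot := sum_eq dmin hdmin emin hemin fun d' hd' e' he' hsum =>
    le_antisymm (le_of_not_gt fun hlt =>
      (add_lt_add_of_lt_of_le hlt (hQmin e' he')).ne' hsum) (hPmin d' hd')
  have hflat : weight w dmax ≤ weight w dmin := le_of_not_gt fun hlt =>
    (add_lt_add_of_lt_of_le hlt (hQmin emax hemax)).ne (hbot.trans htop.symm)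
  exact ⟨weight w dmax, fun d hd => le_antisymm (hPmax d (mem_support_iff.mpr hd))
    (hflat.trans (hPmin d (mem_support_iff.mpr hd)))⟩

theorem isUnit_of_dvd_of_coeff_zero_ne_zero {K : Type*} [Field K] [AddCommMonoid M]
    [LinearOrder M] [IsOrderedCancelAddMonoid M] {w : σ → M} (hw : ∀ i, 0 < w i)
    {F D : MvPolynomial σ K} {t : M} (hF : F.IsWeightedHomogeneous w t) (hF0 : F ≠ 0)
    (hD : D ∣ F) (hD0 : coeff 0 D ≠ 0) : IsUnit D := by
  classical
  obtain ⟨E, rfl⟩ := hD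
  obtain ⟨m, hm⟩ := hF.exists_of_mul_left hF0
  have hm0 : m = 0 := by rw [← hm hD0, map_zero]
  have hconst : D = C (coeff 0 D) := by
    ext n
    rw [coeff_C]
    split_ifs with hn
    · rw [hn]
    by_contra hDn
    obtain ⟨i, hi⟩ := Finsupp.ne_iff.mp (Ne.symm hn)
    have := le_weight_of_ne_zero (fun j => (hw j).le) hi
    rw [hm hDn, hm0] at this
    exact (hw i).not_ge this
  rw [hconst]
  exact (isUnit_iff_ne_zero.mpr hD0).map C

end MvPolynomial

namespace MvPowerSeries

variable {σ K : Type*}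

open Finsupp MvPolynomial

theorem coeff_X_mul_pderiv [CommSemiring K] (i : σ) (f : MvPowerSeries σ K) (e : σ →₀ ℕ) :
    coeff e (X i * pderiv K i f) = e i * coeff e f := by
  classical
  rw [X, coeff_monomial_mul, one_mul]
  split_ifs with hle
  · rw [coeff_pderiv, tsub_add_cancel_of_le hle, tsub_apply, single_eq_same, mul_comm]
    congr
    have : 1 ≤ e i := by simpa using hle i
    rw [← Nat.cast_add_one, Nat.sub_add_cancel this]
  · have : e i = 0 := by
      by_contra h
      exact hle (single_le_iff.mpr (Nat.one_le_iff_ne_zero.mpr h))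
    simp [this]

theorem squarefree_of_squarefree_coe [Field K] {w : σ → ℚ} (hw : ∀ i, 0 < w i)
    {F : MvPolynomial σ K} {t : ℚ} (hF : F.IsWeightedHomogeneous w t)
    (hsq : Squarefree (F : MvPowerSeries σ K)) : Squarefree F := by
  intro d hd
  have hF0 : F ≠ 0 := by
    rintro rfl
    exact hsq.ne_zero MvPolynomial.coe_zero
  have hunit : IsUnit (d : MvPowerSeries σ K) :=
    hsq _ (by simpa using map_dvd coeToMvPowerSeries.ringHom hd)
  rw [isUnit_iff_constantCoeff, ← coeff_zero_eq_constantCoeff_apply, MvPolynomial.coeff_coe,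
    isUnit_iff_ne_zero] at hunit
  exact isUnit_of_dvd_of_coeff_zero_ne_zero hw hF hF0 ((dvd_mul_right d d).trans hd) hunit

variable [Fintype σ]

theorem weight_eq_one_of_euler [Field K] [CharZero K] {w : σ → ℚ} {f : MvPowerSeries σ K}
    (h : ∑ i, (w i : K) • (X i * pderiv K i f) = f) {e : σ →₀ ℕ} (he : coeff e f ≠ 0) :
    weight w e = 1 := by
  have hcoeff := congrArg (coeff e) h
  simp only [map_sum, coeff_smul, coeff_X_mul_pderiv, ← mul_assoc, ← Finset.sum_mul] at hcoeff
  have hw : ((weight w e : ℚ) : K) = 1 := by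
    have := mul_right_cancel₀ he (hcoeff.trans (one_mul _).symm)
    rw [weight_eq_sum]
    push_cast
    simpa [mul_comm] using this
  exact_mod_cast hw

noncomputable def weightBound (w : σ → ℚ) (s : ℚ) : σ →₀ ℕ :=
  equivFunOnFinite.symm fun i => ⌈s / w i⌉₊

theorem le_weightBound {w : σ → ℚ} (hw : ∀ i, 0 < w i) (d : σ →₀ ℕ) :
    d ≤ weightBound w (weight w d) := by
  intro i
  have hterm : (d i : ℚ) * w i ≤ weight w d := by
    rw [weight_eq_sum]
    exact Finset.single_le_sum (f := fun j => d j • w j)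
      (fun j _ => nsmul_nonneg (hw j).le _) (Finset.mem_univ i)
  have hle : (d i : ℚ) ≤ weight w d / w i := (le_div_iff₀ (hw i)).mpr hterm
  exact_mod_cast hle.trans (Nat.le_ceil _)

variable [DecidableEq σ]

/-- The weight-`s` part of `g`; truncating at `weightBound w s` loses nothing once all weights
are positive. -/
noncomputable def weightedComponent [CommSemiring K] (w : σ → ℚ) (s : ℚ)
    (g : MvPowerSeries σ K) : MvPolynomial σ K :=
  MvPolynomial.weightedHomogeneousComponent w s (trunc' K (weightBound w s) g)

variable {w : σ → ℚ}

theorem isWeightedHomogeneous_weightedComponent [CommSemiring K] (s : ℚ)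
    (g : MvPowerSeries σ K) : (weightedComponent w s g).IsWeightedHomogeneous w s :=
  weightedHomogeneousComponent_isWeightedHomogeneous _ _

theorem coeff_weightedComponent [CommSemiring K] (hw : ∀ i, 0 < w i) (s : ℚ)
    (g : MvPowerSeries σ K) (d : σ →₀ ℕ) :
    MvPolynomial.coeff d (weightedComponent w s g) = if weight w d = s then coeff d g else 0 := by
  rw [weightedComponent, MvPolynomial.coeff_weightedHomogeneousComponent, coeff_trunc']
  split_ifs with hd hle
  · rfl
  · exact absurd (hd ▸ le_weightBound hw d) hle
  · rfl

theorem coe_weightedComponent [CommSemiring K] (hw : ∀ i, 0 < w i) {s : ℚ}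
    {g : MvPowerSeries σ K} (h : ∀ e, coeff e g ≠ 0 → weight w e = s) :
    (weightedComponent w s g : MvPowerSeries σ K) = g := by
  ext e
  rw [MvPolynomial.coeff_coe, coeff_weightedComponent hw, ite_eq_left_iff]
  exact fun he => (not_imp_comm.mp (h e) he).symm

theorem weightedComponent_coe_mul [CommSemiring K] (hw : ∀ i, 0 < w i)
    {u : MvPolynomial σ K} {t : ℚ} (hu : u.IsWeightedHomogeneous w t) (s : ℚ)
    (g : MvPowerSeries σ K) :
    weightedComponent w s ((u : MvPowerSeries σ K) * g) = u * weightedComponent w (s - t) g := by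
  ext d
  rw [coeff_weightedComponent hw, MvPolynomial.coeff_mul, MvPowerSeries.coeff_mul]
  split_ifs with hd
  · refine Finset.sum_congr rfl fun ⟨a, b⟩ hab => ?_
    rw [Finset.HasAntidiagonal.mem_antidiagonal] at hab
    by_cases ha : MvPolynomial.coeff a u = 0
    · simp [ha]
    have hb : weight w b = s - t := by
      rw [← hd, ← hab, map_add, hu ha]
      ring
    rw [MvPolynomial.coeff_coe, coeff_weightedComponent hw, if_pos hb]
  · refine (Finset.sum_eq_zero fun ⟨a, b⟩ hab => ?_).symm
    rw [Finset.HasAntidiagonal.mem_antidiagonal] at hab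
    by_cases ha : MvPolynomial.coeff a u = 0
    · simp [ha]
    have hb : weight w b ≠ s - t := fun hb => hd (by rw [← hab, map_add, hu ha, hb]; ring)
    rw [coeff_weightedComponent hw, if_neg hb, mul_zero]

theorem coe_dvd_of_forall_dvd_weightedComponent [CommSemiring K] (hw : ∀ i, 0 < w i)
    {u : MvPolynomial σ K} {t : ℚ} (hu : u.IsWeightedHomogeneous w t)
    {g : MvPowerSeries σ K} (h : ∀ s, u ∣ weightedComponent w s g) :
    (u : MvPowerSeries σ K) ∣ g := by
  choose q hq using h
  -- only the part of `q s` of weight `s - t` contributes to `u * q s`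
  let Q : MvPowerSeries σ K := fun e => MvPolynomial.coeff e (q (weight w e + t))
  refine ⟨Q, ?_⟩
  ext e
  have hcoeff : coeff e g = MvPolynomial.coeff e (weightedComponent w (weight w e) g) := by
    rw [coeff_weightedComponent hw, if_pos rfl]
  rw [hcoeff, hq, MvPolynomial.coeff_mul, MvPowerSeries.coeff_mul]
  refine Finset.sum_congr rfl fun ⟨a, b⟩ hab => ?_
  rw [Finset.HasAntidiagonal.mem_antidiagonal] at hab
  by_cases ha : MvPolynomial.coeff a u = 0
  · simp [ha]
  have hb : weight w b + t = weight w e := by rw [← hab, map_add, hu ha, add_comm]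
  rw [MvPolynomial.coeff_coe, ← hb]
  rfl

theorem coe_dvd_of_forall_dvd_mul_pderiv [Field K] [CharZero K] (hw : ∀ i, 0 < w i)
    {F : MvPolynomial σ K} {t : ℚ} (hF : F.IsWeightedHomogeneous w t) (hsq : Squarefree F)
    {g : MvPowerSeries σ K}
    (h : ∀ i, (F : MvPowerSeries σ K) ∣ g * (MvPolynomial.pderiv i F : MvPowerSeries σ K)) :
    (F : MvPowerSeries σ K) ∣ g := by
  refine coe_dvd_of_forall_dvd_weightedComponent hw hF fun s => ?_
  refine dvd_of_forall_dvd_mul_pderiv hsq fun i => ?_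
  obtain ⟨H, hH⟩ := h i
  have hFi : (MvPolynomial.pderiv i F).IsWeightedHomogeneous w (t - w i) := hF.pderiv (by ring)
  have hcomp := congrArg (weightedComponent w (s + (t - w i))) hH
  rw [mul_comm g, weightedComponent_coe_mul hw hFi, weightedComponent_coe_mul hw hF,
    add_sub_cancel_right] at hcomp
  exact ⟨_, by rw [mul_comm]; exact hcomp⟩

end MvPowerSeries

section LogarithmicForms

variable {R : Type*} [CommRing R] [NoZeroDivisors R] {f a b u v : R}

theorem exists_eq_add_of_dvd_sub_mul (hf : f ≠ 0) (heuler : u * a + v * b = f)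
    (hsat : ∀ g, f ∣ g * a → f ∣ g * b → f ∣ g) {A B : R} (h : f ∣ b * A - a * B) :
    ∃ p c, A = p * a + c * v ∧ B = p * b - c * u := by
  obtain ⟨c, hc⟩ := h
  obtain ⟨p, hp⟩ := hsat (u * A + v * B)
    ⟨A - c * v, by linear_combination A * heuler - v * hc⟩
    ⟨B + c * u, by linear_combination B * heuler + u * hc⟩
  refine ⟨p, c, mul_left_cancel₀ hf ?_, mul_left_cancel₀ hf ?_⟩
  · linear_combination a * hp - A * heuler + v * hc
  · linear_combination b * hp - B * heuler - u * hc

theorem eq_zero_of_smul_add_smul_eq_zero (hf : f ≠ 0) (hv : v ≠ 0) (heuler : u * a + v * b = f)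
    {p c : R} (h : p • (a, b) + c • (v, -u) = 0) : p = 0 ∧ c = 0 := by
  simp only [Prod.smul_mk, Prod.mk_add_mk, smul_eq_mul, Prod.mk_eq_zero] at h
  have hp : p = 0 := by
    have : p * f = 0 := by linear_combination u * h.1 + v * h.2 - p * heuler
    exact (mul_eq_zero.mp this).resolve_right hf
  refine ⟨hp, (mul_eq_zero.mp ?_).resolve_right hv⟩
  linear_combination h.1 - a * hp

theorem exists_basis_comap_span_singleton (hf : f ≠ 0) (hv : v ≠ 0)
    (heuler : u * a + v * b = f) (hsat : ∀ g, f ∣ g * a → f ∣ g * b → f ∣ g) :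
    ∃ B : Module.Basis (Fin 2) R
        (Submodule.comap (b • LinearMap.fst R R R - a • LinearMap.snd R R R) (Ideal.span {f})),
      (B 0 : R × R) = (a, b) ∧ (B 1 : R × R) = (v, -u) := by
  set N := Submodule.comap (b • LinearMap.fst R R R - a • LinearMap.snd R R R) (Ideal.span {f})
  have mem : ∀ A B, (A, B) ∈ N ↔ f ∣ b * A - a * B := fun A B => by
    simp [N, Ideal.mem_span_singleton]
  have h0 : (a, b) ∈ N := (mem a b).2 (by rw [mul_comm, sub_self]; exact dvd_zero f)
  have h1 : (v, -u) ∈ N := (mem v (-u)).2 ⟨1, by linear_combination heuler⟩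
  have li : LinearIndependent R ![(⟨_, h0⟩ : N), ⟨_, h1⟩] :=
    LinearIndependent.pair_iff.2 fun p c h =>
      eq_zero_of_smul_add_smul_eq_zero hf hv heuler (by simpa using congrArg Subtype.val h)
  have sp : ⊤ ≤ Submodule.span R (Set.range ![(⟨_, h0⟩ : N), ⟨_, h1⟩]) := by
    rintro ⟨⟨A, B⟩, hAB⟩ -
    obtain ⟨p, c, rfl, rfl⟩ := exists_eq_add_of_dvd_sub_mul hf heuler hsat ((mem A B).1 hAB)
    rw [Submodule.mem_span_range_iff_exists_fun]
    refine ⟨![p, c], Subtype.ext ?_⟩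
    simp [Fin.sum_univ_two, sub_eq_add_neg]
  exact ⟨Module.Basis.mk li sp, by simp, by simp⟩

end LogarithmicForms

theorem pderiv2_eq_pderiv (i : Fin 2) (f : MvPowerSeries (Fin 2) ℂ) :
    pderiv2 i f = MvPowerSeries.pderiv ℂ i f := by
  ext e
  rw [MvPowerSeries.coeff_pderiv]
  exact mul_comm _ _

theorem logForms_basis_of_quasihomogeneous_general
    (f : MvPowerSeries (Fin 2) ℂ) (hf0 : f ≠ 0) (hsf : Squarefree f)
    (wx wy : ℚ) (hwx : 0 < wx) (hwy : 0 < wy)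
    (hqh : (wx : ℂ) • (MvPowerSeries.X 0 * pderiv2 0 f)
      + (wy : ℂ) • (MvPowerSeries.X 1 * pderiv2 1 f) = f) :
    ∃ B : Module.Basis (Fin 2) (MvPowerSeries (Fin 2) ℂ) ↥(logForms f),
      (B 0 : MvPowerSeries (Fin 2) ℂ × MvPowerSeries (Fin 2) ℂ)
          = (pderiv2 0 f, pderiv2 1 f) ∧
      (B 1 : MvPowerSeries (Fin 2) ℂ × MvPowerSeries (Fin 2) ℂ)
          = ((wy : ℂ) • MvPowerSeries.X 1, -((wx : ℂ) • MvPowerSeries.X 0)) := by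
  have hw : ∀ i, 0 < ![wx, wy] i := Fin.forall_fin_two.2 ⟨hwx, hwy⟩
  have heuler :
      ∑ i, (![wx, wy] i : ℂ) • (MvPowerSeries.X i * MvPowerSeries.pderiv ℂ i f) = f := by
    simpa [Fin.sum_univ_two, pderiv2_eq_pderiv] using hqh
  obtain ⟨F, hF, rfl⟩ : ∃ F : MvPolynomial (Fin 2) ℂ,
      F.IsWeightedHomogeneous ![wx, wy] 1 ∧ (F : MvPowerSeries (Fin 2) ℂ) = f :=
    ⟨_, MvPowerSeries.isWeightedHomogeneous_weightedComponent 1 f,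
      MvPowerSeries.coe_weightedComponent hw fun _ => MvPowerSeries.weight_eq_one_of_euler heuler⟩
  have hderiv : ∀ i, pderiv2 i F = (MvPolynomial.pderiv i F : MvPowerSeries (Fin 2) ℂ) :=
    fun i => by rw [pderiv2_eq_pderiv, MvPowerSeries.pderiv_coe]
  have hy : (wy : ℂ) • MvPowerSeries.X 1 ≠ (0 : MvPowerSeries (Fin 2) ℂ) := fun h => by
    simpa [hwy.ne'] using congrArg (MvPowerSeries.coeff (Finsupp.single 1 1)) h
  refine exists_basis_comap_span_singleton (u := (wx : ℂ) • MvPowerSeries.X 0) hf0 hy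
    (by simpa only [smul_mul_assoc] using hqh) fun g hgx hgy => ?_
  rw [hderiv] at hgx hgy
  exact MvPowerSeries.coe_dvd_of_forall_dvd_mul_pderiv hw hF
    (MvPowerSeries.squarefree_of_squarefree_coe hw hF hsf) (Fin.forall_fin_two.2 ⟨hgx, hgy⟩)

theorem logForms_basis_of_quasihomogeneous
    (f : MvPowerSeries (Fin 2) ℂ) (hf0 : f ≠ 0) (hfu : ¬IsUnit f) (hsf : Squarefree f)
    (wx wy : ℚ) (hwx : 0 < wx) (hwy : 0 < wy)
    (hqh : (wx : ℂ) • (MvPowerSeries.X 0 * pderiv2 0 f)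
      + (wy : ℂ) • (MvPowerSeries.X 1 * pderiv2 1 f) = f) :
    ∃ B : Module.Basis (Fin 2) (MvPowerSeries (Fin 2) ℂ) ↥(logForms f),
      (B 0 : MvPowerSeries (Fin 2) ℂ × MvPowerSeries (Fin 2) ℂ)
          = (pderiv2 0 f, pderiv2 1 f) ∧
      (B 1 : MvPowerSeries (Fin 2) ℂ × MvPowerSeries (Fin 2) ℂ)
          = ((wy : ℂ) • MvPowerSeries.X 1, -((wx : ℂ) • MvPowerSeries.X 0)) :=
  logForms_basis_of_quasihomogeneous_general f hf0 hsf wx wy hwx hwy hqh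
end
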